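/- Let c, k ≥ 1 and v ≥ 1 be natural numbers, let v₀, v₁, ..., v_k be vectors in ℕ^c with ‖v_j‖₁ ≤ v for all 0 ≤ j ≤ k and ‖v_j‖₁ ≥ 1 for all 1 ≤ j ≤ k. Let a₁, ..., a_k ∈ ℕ and set h = v₀ + Σ_{j=1}^{k} a_j v_j and n = ‖h‖₁. Let n₀ ≤ n be a positive natural number and for each j let a'_j be a nearest integer to a_j·n₀/n. Set h' = v₀ + Σ_{j=1}^{k} a'_j v_j. Then ‖h'‖₁ ≤ n₀ + (k+1)·v. -/

import Mathlib

/-!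
Summing coordinates, `‖h'‖₁ = ‖v₀‖₁ + Σ a'_j ‖v_j‖₁` and `n = ‖v₀‖₁ + Σ a_j ‖v_j‖₁`. Rounding
costs at most `‖v_j‖₁ / 2` per term, and the unrounded part `(n₀ / n) Σ a_j ‖v_j‖₁` is at most
`n₀` because `Σ a_j ‖v_j‖₁ ≤ n`. Hence `‖h'‖₁ ≤ ‖v₀‖₁ + n₀ + ½ Σ ‖v_j‖₁ ≤ n₀ + (k + 1) v`.
-/

open Finset

theorem sum_add_sum_mul_eq {ι κ R : Type*} [Fintype ι] [Fintype κ] [CommSemiring R]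
    (v0 : ι → R) (V : κ → ι → R) (b : κ → R) :
    ∑ i, (v0 i + ∑ j, b j * V j i) = ∑ i, v0 i + ∑ j, b j * ∑ i, V j i := by
  simp only [sum_add_distrib, mul_sum]
  rw [sum_comm]

theorem mul_le_mul_add_half_of_abs_sub_le_half {K : Type*} [Field K] [LinearOrder K]
    [IsStrictOrderedRing K] {a x s : K} (ha : |a - x| ≤ 1 / 2)
    (hs : 0 ≤ s) : a * s ≤ x * s + s / 2 := by
  nlinarith [(abs_le.mp ha).2]

theorem div_mul_le_self_of_le {K : Type*} [Field K] [LinearOrder K] [IsStrictOrderedRing K]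
    {n₀ n A : K} (hn₀ : 0 ≤ n₀) (hA : A ≤ n) (hA₀ : 0 ≤ A) :
    n₀ / n * A ≤ n₀ := by
  rw [div_mul_eq_mul_div, mul_div_assoc]
  exact mul_le_of_le_one_right hn₀ (div_le_one_of_le₀ hA (hA₀.trans hA))

theorem sum_add_sum_rounded_mul_le {ι κ : Type*} [Fintype ι] [Fintype κ]
    (v0 : ι → ℕ) (V : κ → ι → ℕ) (a a' : κ → ℕ) (n n₀ : ℕ)
    (hn : n = ∑ i, (v0 i + ∑ j, a j * V j i))
    (ha' : ∀ j, |(a' j : ℚ) - (a j : ℚ) * n₀ / n| ≤ 1 / 2) :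
    ((∑ i, (v0 i + ∑ j, a' j * V j i) : ℕ) : ℚ)
      ≤ ∑ i, (v0 i : ℚ) + n₀ + (∑ j, ∑ i, (V j i : ℚ)) / 2 := by
  set s : κ → ℚ := fun j ↦ ∑ i, (V j i : ℚ)
  have hs : ∀ j, 0 ≤ s j := fun j ↦ by positivity
  have hA : ∑ j, (a j : ℚ) * s j ≤ n := by
    rw [hn, sum_add_sum_mul_eq]
    push_cast
    exact le_add_of_nonneg_left (by positivity)
  have hrounded : ∑ j, (a' j : ℚ) * s j ≤ n₀ / n * ∑ j, (a j : ℚ) * s j + (∑ j, s j) / 2 :=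
    calc ∑ j, (a' j : ℚ) * s j
        ≤ ∑ j, ((a j : ℚ) * n₀ / n * s j + s j / 2) :=
          sum_le_sum fun j _ ↦ mul_le_mul_add_half_of_abs_sub_le_half (ha' j) (hs j)
      _ = n₀ / n * ∑ j, (a j : ℚ) * s j + (∑ j, s j) / 2 := by
          rw [sum_add_distrib, mul_sum, sum_div]
          congr 1
          exact sum_congr rfl fun j _ ↦ by ring
  rw [sum_add_sum_mul_eq]
  push_cast
  linarith [div_mul_le_self_of_le (Nat.cast_nonneg n₀) hA (by positivity)]

theorem rounded_histogram_norm_upper_bound_general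
    (c k v : ℕ)
    (v0 : Fin c → ℕ) (V : Fin k → Fin c → ℕ)
    (hv0 : ∑ i, v0 i ≤ v) (hV : ∀ j, ∑ i, V j i ≤ v)
    (a : Fin k → ℕ) (n : ℕ) (hn : n = ∑ i, (v0 i + ∑ j, a j * V j i))
    (n0 : ℕ)
    (a' : Fin k → ℕ) (ha' : ∀ j, |(a' j : ℚ) - (a j : ℚ) * n0 / n| ≤ 1 / 2) :
    ((∑ i, (v0 i + ∑ j, a' j * V j i) : ℕ) : ℚ) ≤ (n0 : ℚ) + (k + 1) * v := by
  have hv0' : ∑ i, (v0 i : ℚ) ≤ v := by exact_mod_cast hv0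
  have hV' : ∑ j, ∑ i, (V j i : ℚ) ≤ k * v := by
    calc ∑ j, ∑ i, (V j i : ℚ) ≤ ∑ _j : Fin k, (v : ℚ) :=
          sum_le_sum fun j _ ↦ by exact_mod_cast hV j
      _ = k * v := by simp
  have hkv : (0 : ℚ) ≤ k * v := by positivity
  linarith [sum_add_sum_rounded_mul_le v0 V a a' n n0 hn ha']

/-- Rounding coefficients of a linear combination down to target size `n₀`:
upper bound `‖h'‖₁ ≤ n₀ + (k+1)·v` on the L1 norm of the rounded histogram. -/
theorem rounded_histogram_norm_upper_bound
    (c k v : ℕ) (hc : 1 ≤ c) (hk : 1 ≤ k) (hv : 1 ≤ v)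
    (v0 : Fin c → ℕ) (V : Fin k → Fin c → ℕ)
    (hv0 : ∑ i, v0 i ≤ v) (hV : ∀ j, ∑ i, V j i ≤ v) (hV1 : ∀ j, 1 ≤ ∑ i, V j i)
    (a : Fin k → ℕ) (n : ℕ) (hn : n = ∑ i, (v0 i + ∑ j, a j * V j i))
    (n0 : ℕ) (hn0pos : 0 < n0) (hn0 : n0 ≤ n)
    (a' : Fin k → ℕ) (ha' : ∀ j, |(a' j : ℚ) - (a j : ℚ) * n0 / n| ≤ 1 / 2) :
    ((∑ i, (v0 i + ∑ j, a' j * V j i) : ℕ) : ℚ) ≤ (n0 : ℚ) + (k + 1) * v :=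
  rounded_histogram_norm_upper_bound_general c k v v0 V hv0 hV a n hn n0 a' ha'
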